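/- If a Dirichlet series Σ_{n=2}^∞ a_n n^{-s} converges uniformly on the half-plane {s : Re s > ε} for some ε ≥ 0, then the series Σ_{n=2}^∞ a_n / (n^s log n) also converges uniformly on {s : Re s > ε}. -/

import Mathlib

/-!
Dividing the `n`-th term by `log n` multiplies it by the nonnegative, decreasing weight
`λ_n = (log n)⁻¹`. By Abel summation, a block `∑_{M ≤ n < N} λ_n b_n(s)` is bounded by
`λ_M ≤ λ_2` times the largest block `∑_{M ≤ n < N'} b_n(s)`, so the uniform Cauchy criterion
passes from the original series to the weighted one, and completeness of `ℂ` supplies the limit.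
-/

open Filter Finset

section AbelSummation

variable {E : Type*} [NormedAddCommGroup E] [NormedSpace ℝ E]

/-- **Abel's inequality**. -/
theorem norm_sum_range_smul_le_of_antitone {f : ℕ → ℝ} {z : ℕ → E} {δ : ℝ}
    (hf : Antitone f) (hf0 : ∀ k, 0 ≤ f k) (hz : ∀ j, ‖∑ i ∈ range j, z i‖ ≤ δ) (K : ℕ) :
    ‖∑ k ∈ range K, f k • z k‖ ≤ f 0 * δ := by
  have hδ : 0 ≤ δ := (norm_nonneg _).trans (hz 0)
  cases K with
  | zero => simpa using mul_nonneg (hf0 0) hδ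
  | succ n =>
    rw [sum_range_by_parts, Nat.add_sub_cancel]
    have hlast : ‖f n • ∑ i ∈ range (n + 1), z i‖ ≤ f n * δ := by
      rw [norm_smul, Real.norm_of_nonneg (hf0 n)]
      exact mul_le_mul_of_nonneg_left (hz _) (hf0 n)
    have hsteps : ‖∑ i ∈ range n, (f (i + 1) - f i) • ∑ j ∈ range (i + 1), z j‖
        ≤ ∑ i ∈ range n, (f i - f (i + 1)) * δ := by
      refine (norm_sum_le _ _).trans (sum_le_sum fun i _ => ?_)
      rw [norm_smul, Real.norm_of_nonpos (sub_nonpos.2 (hf i.le_succ)), neg_sub]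
      exact mul_le_mul_of_nonneg_left (hz _) (sub_nonneg.2 (hf i.le_succ))
    have htelescope : ∑ i ∈ range n, (f i - f (i + 1)) * δ = (f 0 - f n) * δ := by
      rw [← sum_mul, sum_range_sub']
    calc _ ≤ f n * δ + (f 0 - f n) * δ :=
          (norm_sub_le _ _).trans (add_le_add hlast (htelescope ▸ hsteps))
      _ = f 0 * δ := by ring

variable {α : Type*} {b : ℕ → α → E} {t : Set α}

theorem UniformCauchySeqOn.series_smul_of_antitone {f : ℕ → ℝ} (hf : Antitone f)
    (hf0 : ∀ k, 0 ≤ f k) (hb : UniformCauchySeqOn (fun N x => ∑ n ∈ range N, b n x) atTop t) :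
    UniformCauchySeqOn (fun N x => ∑ n ∈ range N, f n • b n x) atTop t := by
  rw [Metric.uniformCauchySeqOn_iff] at hb ⊢
  intro ε hε
  set δ := ε / (f 0 + 1)
  have hδ : 0 < δ := div_pos hε (by linarith [hf0 0])
  have hfδ : f 0 * δ < ε := by
    rw [← mul_div_assoc, div_lt_iff₀ (by linarith [hf0 0])]
    nlinarith
  obtain ⟨N₀, hN₀⟩ := hb δ hδ
  have hblock : ∀ M ≥ N₀, ∀ K, ∀ x ∈ t,
      ‖∑ n ∈ range (M + K), f n • b n x - ∑ n ∈ range M, f n • b n x‖ < ε := by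
    intro M hM K x hx
    have hpartial : ∀ j, ‖∑ i ∈ range j, b (M + i) x‖ ≤ δ := fun j => by
      have := (hN₀ (M + j) (by omega) M hM x hx).le
      rwa [dist_eq_norm, sum_range_add, add_sub_cancel_left] at this
    rw [sum_range_add, add_sub_cancel_left]
    calc _ ≤ f (M + 0) * δ := norm_sum_range_smul_le_of_antitone
            (fun _ _ h => hf (by omega)) (fun k => hf0 _) hpartial K
      _ ≤ f 0 * δ := by gcongr; exact hf (Nat.zero_le _)
      _ < ε := hfδ
  refine ⟨N₀, fun m hm n hn x hx => ?_⟩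
  rcases le_total m n with hmn | hnm
  · obtain ⟨K, rfl⟩ := Nat.exists_eq_add_of_le hmn
    rw [dist_comm, dist_eq_norm]; exact hblock m hm K x hx
  · obtain ⟨K, rfl⟩ := Nat.exists_eq_add_of_le hnm
    rw [dist_eq_norm]; exact hblock n hn K x hx

end AbelSummation

theorem UniformCauchySeqOn.exists_tendstoUniformlyOn {ι α β : Type*} [UniformSpace β]
    [CompleteSpace β] {F : ι → α → β} {p : Filter ι} [NeBot p] {s : Set α}
    (hF : UniformCauchySeqOn F p s) : ∃ g : α → β, TendstoUniformlyOn F g p s := by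
  classical
  obtain ⟨i₀⟩ := p.nonempty_of_neBot
  have hlim (x : α) (hx : x ∈ s) : ∃ y, Tendsto (fun i => F i x) p (nhds y) :=
    CompleteSpace.complete (hF.cauchy_map hx)
  refine ⟨fun x => if hx : x ∈ s then (hlim x hx).choose else F i₀ x,
    hF.tendstoUniformlyOn_of_tendsto fun x hx => ?_⟩
  rw [dif_pos hx]
  exact (hlim x hx).choose_spec

theorem antitone_inv_log_nat_add_two : Antitone fun n : ℕ => (Real.log (n + 2))⁻¹ := by
  intro m n hmn
  have hpos : 0 < Real.log (m + 2) := Real.log_pos (by linarith [m.cast_nonneg (α := ℝ)])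
  exact inv_anti₀ hpos (Real.log_le_log (by positivity) (by gcongr))

theorem integrated_dirichlet_series_unif_conv_general
    (a : ℕ → ℂ) (ε : ℝ) (f : ℂ → ℂ)
    (hf : TendstoUniformlyOn
      (fun N s => ∑ n ∈ Finset.range N,
        a (n + 2) * Complex.exp (-s * Real.log (n + 2))) f atTop {s : ℂ | ε < s.re}) :
    ∃ g : ℂ → ℂ, TendstoUniformlyOn
      (fun N s => ∑ n ∈ Finset.range N,
        a (n + 2) / (Complex.exp (s * Real.log (n + 2)) * (Real.log (n + 2) : ℂ)))
      g atTop {s : ℂ | ε < s.re} := by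
  have hterm (n : ℕ) (s : ℂ) :
      a (n + 2) / (Complex.exp (s * Real.log (n + 2)) * (Real.log (n + 2) : ℂ)) =
        (Real.log (n + 2))⁻¹ • (a (n + 2) * Complex.exp (-s * Real.log (n + 2))) := by
    rw [Complex.real_smul, neg_mul, Complex.exp_neg, Complex.ofReal_inv]
    ring
  simp_rw [hterm]
  refine UniformCauchySeqOn.exists_tendstoUniformlyOn ?_
  exact hf.uniformCauchySeqOn.series_smul_of_antitone antitone_inv_log_nat_add_two
    fun n => inv_nonneg.2 (Real.log_nonneg (by linarith [n.cast_nonneg (α := ℝ)]))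

/-- If the Dirichlet series `∑_{n≥2} a_n n^{-s}` converges uniformly on `{Re s > ε}` for
some `ε ≥ 0`, then `∑_{n≥2} a_n / (n^s log n)` also converges uniformly on `{Re s > ε}`. -/
theorem integrated_dirichlet_series_unif_conv
    (a : ℕ → ℂ) (ε : ℝ) (hε : 0 ≤ ε) (f : ℂ → ℂ)
    (hf : TendstoUniformlyOn
      (fun N s => ∑ n ∈ Finset.range N,
        a (n + 2) * Complex.exp (-s * Real.log (n + 2))) f atTop {s : ℂ | ε < s.re}) :
    ∃ g : ℂ → ℂ, TendstoUniformlyOn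
      (fun N s => ∑ n ∈ Finset.range N,
        a (n + 2) / (Complex.exp (s * Real.log (n + 2)) * (Real.log (n + 2) : ℂ)))
      g atTop {s : ℂ | ε < s.re} :=
  integrated_dirichlet_series_unif_conv_general a ε f hf
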